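/- arXiv:1909.09886 — 4 statements merged into one kernel-verified Lean document; each statement's English description precedes it below -/
import Mathlib

section
/- Let (X,d) be a metric space, A ⊆ X, M ⊆ X, Ω = M ∩ A nonempty, and let φ : X → [0,∞) satisfy φ(x) = 0 iff x ∈ M. Suppose x* ∈ Ω is a local minimizer of a function I : X → ℝ on Ω, that I is Lipschitz continuous with constant L > 0 on a ball B(x*, r₀), and that there exist r > 0 and a > 0 with φ(x) ≥ a · dist(x, Ω) for all x ∈ B(x*, r) ∩ A. Then for every λ ≥ L/a the point x* is a local minimizer of the penalty function Φ_λ(x) = I(x) + λ φ(x) on A. -/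
/-!
Near `x*`, the Lipschitz bound and local minimality on `Ω` give, for `y ∈ Ω` close to `x`,
`I x* ≤ I y ≤ I x + L * d(x, y)`; passing to the infimum over `y`,
`I x* ≤ I x + L * dist(x, Ω)`. On `A` the error bound turns `L * dist(x, Ω)` into at most
`(L / a) * φ x ≤ λ * φ x`, while `φ x* = 0`.
-/

open Filter Metric Topology

lemma le_add_mul_infDist_of_forall_dist_lt {X : Type*} [PseudoMetricSpace X] {s : Set X}
    {x : X} {b c L R : ℝ} (hs : s.Nonempty) (hL : 0 ≤ L) (hR : infDist x s < R)
    (h : ∀ y ∈ s, dist x y < R → c ≤ b + L * dist x y) :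
    c ≤ b + L * infDist x s := by
  have hlim : Tendsto (fun t => b + L * t) (𝓝[>] (infDist x s)) (𝓝 (b + L * infDist x s)) :=
    ((continuous_const.add (continuous_const.mul continuous_id)).tendsto _).mono_left
      nhdsWithin_le_nhds
  refine ge_of_tendsto hlim ?_
  filter_upwards [Ioo_mem_nhdsGT hR] with t ⟨hdt, htR⟩
  obtain ⟨y, hy, hxy⟩ := (infDist_lt_iff hs).1 hdt
  calc c ≤ b + L * dist x y := h y hy (hxy.trans htR)
    _ ≤ b + L * t := by gcongr

lemma eventually_le_add_mul_infDist_of_isLocalMinOn {X : Type*} [PseudoMetricSpace X]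
    {I : X → ℝ} {Ω : Set X} {xs : X} {L r₀ : ℝ} (hloc : IsLocalMinOn I Ω xs) (hxs : xs ∈ Ω)
    (hL : 0 ≤ L) (hr₀ : 0 < r₀)
    (hlip : ∀ x ∈ closedBall xs r₀, ∀ y ∈ closedBall xs r₀, |I x - I y| ≤ L * dist x y) :
    ∀ᶠ x in 𝓝 xs, I xs ≤ I x + L * infDist x Ω := by
  obtain ⟨ε, hε, hmin⟩ := mem_nhdsWithin_iff.1 hloc
  set ρ := min r₀ ε
  have hρ : 0 < ρ := lt_min hr₀ hε
  filter_upwards [ball_mem_nhds xs (half_pos hρ)] with x hx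
  rw [mem_ball] at hx
  -- Points of `Ω` within `ρ / 2` of `x` lie within `ρ` of `xs`, where both the local
  -- minimality and the Lipschitz bound apply.
  refine le_add_mul_infDist_of_forall_dist_lt ⟨xs, hxs⟩ hL (R := ρ / 2)
    ((infDist_le_dist_of_mem hxs).trans_lt (dist_comm x xs ▸ hx)) fun y hy hxy => ?_
  have hyxs : dist y xs < ρ := by linarith [dist_triangle_left y xs x]
  have hball : ∀ z, dist z xs < ρ → z ∈ closedBall xs r₀ := fun z hz =>
    mem_closedBall.2 (hz.le.trans (min_le_left _ _))
  calc I xs ≤ I y := hmin ⟨mem_ball.2 (hyxs.trans_le (min_le_right _ _)), hy⟩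
    _ ≤ I x + L * dist x y := by
      have := hlip y (hball y hyxs) x (hball x (by linarith))
      rw [dist_comm] at this
      linarith [le_abs_self (I y - I x)]

theorem stmt0_general {X : Type*} [MetricSpace X] (A M : Set X) (I φ : X → ℝ)
    (Ω : Set X) (hΩ : Ω = M ∩ A)
    (hφM : ∀ x, φ x = 0 ↔ x ∈ M)
    (xs : X) (hxs : xs ∈ Ω) (hloc : IsLocalMinOn I Ω xs)
    (L r₀ : ℝ) (hL : 0 < L) (hr₀ : 0 < r₀)
    (hlip : ∀ x ∈ Metric.closedBall xs r₀, ∀ y ∈ Metric.closedBall xs r₀,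
      |I x - I y| ≤ L * dist x y)
    (r a : ℝ) (hr : 0 < r) (ha : 0 < a)
    (herr : ∀ x ∈ Metric.closedBall xs r ∩ A, a * Metric.infDist x Ω ≤ φ x) :
    ∀ lam : ℝ, L / a ≤ lam → IsLocalMinOn (fun x => I x + lam * φ x) A xs := by
  intro lam hlam
  have hφxs : φ xs = 0 := (hφM xs).2 (hΩ ▸ hxs).1
  have hlam0 : 0 ≤ lam := (div_pos hL ha).le.trans hlam
  have hLa : L ≤ lam * a := (div_le_iff₀ ha).1 hlam
  have hdistPenalty := eventually_le_add_mul_infDist_of_isLocalMinOn hloc hxs hL.le hr₀ hlip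
  filter_upwards [nhdsWithin_le_nhds hdistPenalty, self_mem_nhdsWithin,
    nhdsWithin_le_nhds (closedBall_mem_nhds xs hr)] with x hIx hxA hxr
  calc I xs + lam * φ xs = I xs := by rw [hφxs, mul_zero, add_zero]
    _ ≤ I x + L * infDist x Ω := hIx
    _ ≤ I x + lam * (a * infDist x Ω) := by
      rw [← mul_assoc]; gcongr; exact infDist_nonneg
    _ ≤ I x + lam * φ x := by gcongr; exact herr x ⟨hxr, hxA⟩

/-- Exact penalty: local exactness (Theorem on local exactness, metric space setting). -/
theorem stmt0 {X : Type*} [MetricSpace X] (A M : Set X) (I φ : X → ℝ)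
    (Ω : Set X) (hΩ : Ω = M ∩ A) (hne : Ω.Nonempty)
    (hφ0 : ∀ x, 0 ≤ φ x) (hφM : ∀ x, φ x = 0 ↔ x ∈ M)
    (xs : X) (hxs : xs ∈ Ω) (hloc : IsLocalMinOn I Ω xs)
    (L r₀ : ℝ) (hL : 0 < L) (hr₀ : 0 < r₀)
    (hlip : ∀ x ∈ Metric.closedBall xs r₀, ∀ y ∈ Metric.closedBall xs r₀,
      |I x - I y| ≤ L * dist x y)
    (r a : ℝ) (hr : 0 < r) (ha : 0 < a)
    (herr : ∀ x ∈ Metric.closedBall xs r ∩ A, a * Metric.infDist x Ω ≤ φ x) :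
    ∀ lam : ℝ, L / a ≤ lam → IsLocalMinOn (fun x => I x + lam * φ x) A xs :=
  stmt0_general A M I φ Ω hΩ hφM xs hxs hloc L r₀ hL hr₀ hlip r a hr ha herr
end

section
/- Let (X,d) be a metric space, A ⊆ X, Ω ⊆ A, x ∈ A \ Ω, and let φ : X → [0,∞) and I : X → ℝ be given. Suppose I is Lipschitz continuous on A with constant L > 0 and the rate of steepest descent of φ with respect to A at x satisfies φ^↓_A(x) ≤ −a for some a > 0. Then for every λ > 2L/a the rate of steepest descent of Φ_λ = I + λφ with respect to A at x is strictly negative; in particular x is not an inf-stationary point of Φ_λ on A. -/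
open Filter Topology

/-- The rate of steepest descent `f^↓_K(x)`. At a point isolated in `K` the filter is `⊥` and
the liminf is `⊤`, as in the paper. -/
noncomputable def descentRate {X : Type*} [MetricSpace X] (f : X → ℝ) (K : Set X) (x : X) :
    EReal :=
  liminf (fun y => (((f y - f x) / dist y x : ℝ) : EReal)) (𝓝[K \ {x}] x)

section descentRate

variable {X : Type*} [MetricSpace X] {f g : X → ℝ} {K : Set X} {x : X}

theorem frequently_lt_of_descentRate_lt {c : ℝ} (h : descentRate f K x < c) :
    ∃ᶠ y in 𝓝[K \ {x}] x, (f y - f x) / dist y x < c := by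
  have := frequently_lt_of_liminf_lt (by isBoundedDefault) h
  exact this.mono fun y hy => EReal.coe_lt_coe_iff.mp hy

theorem descentRate_le_of_frequently_le {c : ℝ}
    (h : ∃ᶠ y in 𝓝[K \ {x}] x, (f y - f x) / dist y x ≤ c) : descentRate f K x ≤ c :=
  liminf_le_of_frequently_le' (h.mono fun _ hy => EReal.coe_le_coe_iff.mpr hy)

theorem descentRate_add_mul_le {L lam c : ℝ} (hf : ∀ y ∈ K, f y - f x ≤ L * dist y x)
    (hlam : 0 ≤ lam) (hg : descentRate g K x < c) :
    descentRate (fun y => f y + lam * g y) K x ≤ (L + lam * c : ℝ) := by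
  apply descentRate_le_of_frequently_le
  refine ((frequently_lt_of_descentRate_lt hg).and_eventually self_mem_nhdsWithin).mono ?_
  rintro y ⟨hgy, hyK, hyx⟩
  have hd : 0 < dist y x := dist_pos.mpr hyx
  have hfy : (f y - f x) / dist y x ≤ L := (div_le_iff₀ hd).mpr (hf y hyK)
  calc (f y + lam * g y - (f x + lam * g x)) / dist y x
      = (f y - f x) / dist y x + lam * ((g y - g x) / dist y x) := by field_simp; ring
    _ ≤ L + lam * c := add_le_add hfy (mul_le_mul_of_nonneg_left hgy.le hlam)

end descentRate

theorem stmt3_general {X : Type*} [MetricSpace X] (A : Set X) (I φ : X → ℝ)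
    (x : X) (hx : x ∈ A)
    (L : ℝ) (hL : 0 < L)
    (hlip : ∀ y ∈ A, ∀ z ∈ A, |I y - I z| ≤ L * dist y z)
    (a : ℝ) (ha : 0 < a)
    (hdesc : Filter.liminf (fun y => (((φ y - φ x) / dist y x : ℝ) : EReal))
      (nhdsWithin x (A \ {x})) ≤ ((-a : ℝ) : EReal)) :
    ∀ lam : ℝ, 2 * L / a < lam →
      Filter.liminf
        (fun y => ((((I y + lam * φ y) - (I x + lam * φ x)) / dist y x : ℝ) : EReal))
        (nhdsWithin x (A \ {x})) < (0 : EReal) ∧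
      ¬ (0 : EReal) ≤ Filter.liminf
        (fun y => ((((I y + lam * φ y) - (I x + lam * φ x)) / dist y x : ℝ) : EReal))
        (nhdsWithin x (A \ {x})) := by
  intro lam hlam
  have hlam0 : 0 < lam := lt_of_le_of_lt (by positivity) hlam
  have hgap : L + lam * (-a / 2) < 0 := by nlinarith [(div_lt_iff₀ ha).mp hlam]
  have hφ : descentRate φ A x < ((-a / 2 : ℝ) : EReal) :=
    hdesc.trans_lt (EReal.coe_lt_coe_iff.mpr (by linarith))
  have hrate := descentRate_add_mul_le (fun y hy => (le_abs_self _).trans (hlip y hy x hx))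
    hlam0.le hφ
  have hneg : descentRate (fun y => I y + lam * φ y) A x < 0 :=
    hrate.trans_lt (by exact_mod_cast hgap)
  exact ⟨hneg, not_le.mpr hneg⟩

/-- If `I` is Lipschitz on `A` with constant `L` and the rate of steepest descent of
`φ` w.r.t. `A` at `x ∈ A \ Ω` is at most `−a`, then for `λ > 2L/a` the rate of steepest
descent of `Φ_λ = I + λφ` at `x` is strictly negative; in particular `x` is not an
inf-stationary point of `Φ_λ` on `A`. (Rates of steepest descent are liminfs in
`ℝ ∪ {±∞}`, i.e. `EReal`.) -/
theorem stmt3 {X : Type*} [MetricSpace X] (A Ω : Set X) (I φ : X → ℝ)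
    (x : X) (hx : x ∈ A) (hxΩ : x ∉ Ω)
    (hφ0 : ∀ y, 0 ≤ φ y) (hφΩ : ∀ y ∈ A, (φ y = 0 ↔ y ∈ Ω))
    (L : ℝ) (hL : 0 < L)
    (hlip : ∀ y ∈ A, ∀ z ∈ A, |I y - I z| ≤ L * dist y z)
    (a : ℝ) (ha : 0 < a)
    (hdesc : Filter.liminf (fun y => (((φ y - φ x) / dist y x : ℝ) : EReal))
      (nhdsWithin x (A \ {x})) ≤ ((-a : ℝ) : EReal)) :
    ∀ lam : ℝ, 2 * L / a < lam →
      Filter.liminf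
        (fun y => ((((I y + lam * φ y) - (I x + lam * φ x)) / dist y x : ℝ) : EReal))
        (nhdsWithin x (A \ {x})) < (0 : EReal) ∧
      ¬ (0 : EReal) ≤ Filter.liminf
        (fun y => ((((I y + lam * φ y) - (I x + lam * φ x)) / dist y x : ℝ) : EReal))
        (nhdsWithin x (A \ {x})) :=
  stmt3_general A I φ x hx L hL hlip a ha hdesc
end

section
/- Let X be a normed space, A ⊆ X convex, f : X → ℝ convex, and suppose there exists x̂ ∈ A with f(x̂) ≤ η for some η < 0. Then for every x ∈ A with f(x) > 0, setting d = x̂ − x (so d ≠ 0), one has limsup_{α → 0+} (max{f(x + α d), 0} − max{f(x),0})/α ≤ η. Consequently the rate of steepest descent of f⁺ = max{f, 0} with respect to A at x is at most η/‖x̂ − x‖. -/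
/-!
Convexity along the segment from `x` to `x̂` gives `f (x + α (x̂ - x)) ≤ f x + α η` for
`α ∈ [0, 1]`. Since `f x > 0`, the right-hand side stays positive for small `α`, so the cut-off
at `0` is inactive and the same bound holds for `f⁺`. For small `α > 0` the segment lies in
`A \ {x}`, at distance `α ‖x̂ - x‖` from `x`, so the difference quotients along it are frequently
at most `η / ‖x̂ - x‖`, which bounds the liminf defining the rate of steepest descent.
-/

open Filter Topology

section ConvexDescent

variable {E : Type*} [AddCommGroup E] [Module ℝ E] {s : Set E} {f : E → ℝ} {x y : E}

lemma ConvexOn.le_add_smul_sub (hf : ConvexOn ℝ s f) (hx : x ∈ s) (hy : y ∈ s) {α : ℝ}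
    (hα₀ : 0 ≤ α) (hα₁ : α ≤ 1) : f (x + α • (y - x)) ≤ f x + α * (f y - f x) := by
  have hseg : x + α • (y - x) = (1 - α) • x + α • y := by
    rw [smul_sub, sub_smul, one_smul]; abel
  have h := hf.2 hx hy (sub_nonneg.mpr hα₁) hα₀ (sub_add_cancel 1 α)
  rw [smul_eq_mul, smul_eq_mul] at h
  rw [hseg]; linarith

lemma ConvexOn.eventually_max_zero_sub_le (hf : ConvexOn ℝ s f) (hx : x ∈ s) (hy : y ∈ s)
    {η : ℝ} (hfy : f y ≤ η) (hfx : 0 < f x) :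
    ∀ᶠ α in 𝓝[>] (0 : ℝ), max (f (x + α • (y - x))) 0 - max (f x) 0 ≤ α * η := by
  have hpos : ∀ᶠ α in 𝓝 (0 : ℝ), 0 < f x + α * η := by
    have : Tendsto (fun α : ℝ => f x + α * η) (𝓝 0) (𝓝 (f x)) := by
      simpa using ((tendsto_id (x := 𝓝 (0 : ℝ))).mul_const η).const_add (f x)
    exact this.eventually (lt_mem_nhds hfx)
  filter_upwards [nhdsWithin_le_nhds hpos, Ioc_mem_nhdsGT one_pos] with α hpos ⟨hα₀, hα₁⟩
  have hdescent : f (x + α • (y - x)) ≤ f x + α * η := calc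
    f (x + α • (y - x)) ≤ f x + α * (f y - f x) := hf.le_add_smul_sub hx hy hα₀.le hα₁
    _ ≤ f x + α * η := by gcongr; linarith
  rw [max_eq_left hfx.le]
  linarith [max_le hdescent hpos.le]

end ConvexDescent

lemma tendsto_add_smul_sub_nhdsWithin_diff {E : Type*} [NormedAddCommGroup E] [NormedSpace ℝ E]
    {A : Set E} (hA : Convex ℝ A) {x y : E} (hx : x ∈ A) (hy : y ∈ A) (hxy : y - x ≠ 0) :
    Tendsto (fun α : ℝ => x + α • (y - x)) (𝓝[>] 0) (𝓝[A \ {x}] x) := by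
  refine tendsto_nhdsWithin_iff.mpr ⟨?_, ?_⟩
  · have h : Continuous fun α : ℝ => x + α • (y - x) := by fun_prop
    simpa using h.tendsto' 0 x (by simp) |>.mono_left nhdsWithin_le_nhds
  · filter_upwards [Ioc_mem_nhdsGT one_pos] with α ⟨hα₀, hα₁⟩
    refine ⟨hA.add_smul_sub_mem hx hy ⟨hα₀.le, hα₁⟩, ?_⟩
    simpa [Set.mem_singleton_iff, hα₀.ne'] using hxy

lemma EReal.limsup_coe_le_of_eventually_le {ι : Type*} {l : Filter ι} {u : ι → ℝ} {c : ℝ}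
    (h : ∀ᶠ i in l, u i ≤ c) : limsup (fun i => (u i : EReal)) l ≤ c :=
  limsup_le_of_le (by isBoundedDefault) (h.mono fun _ hi => EReal.coe_le_coe_iff.mpr hi)

/-- Slater-type descent estimate for convex constraints: if `f(x̂) ≤ η < 0` for some
`x̂ ∈ A` and `f(x) > 0` at `x ∈ A`, then along the direction `d = x̂ − x` the upper
Dini difference quotient of `f⁺ = max{f,0}` is at most `η`, and hence the rate of
steepest descent of `f⁺` w.r.t. `A` at `x` is at most `η/‖x̂ − x‖`. -/
theorem stmt5 {X : Type*} [NormedAddCommGroup X] [NormedSpace ℝ X]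
    (A : Set X) (hA : Convex ℝ A) (f : X → ℝ) (hf : ConvexOn ℝ Set.univ f)
    (xhat : X) (hxhat : xhat ∈ A) (η : ℝ) (hη : η < 0) (hfhat : f xhat ≤ η)
    (x : X) (hx : x ∈ A) (hfx : 0 < f x) :
    xhat - x ≠ 0 ∧
    Filter.limsup
      (fun α : ℝ => (((max (f (x + α • (xhat - x))) 0 - max (f x) 0) / α : ℝ) : EReal))
      (nhdsWithin 0 (Set.Ioi (0 : ℝ))) ≤ ((η : ℝ) : EReal) ∧
    Filter.liminf
      (fun y => (((max (f y) 0 - max (f x) 0) / ‖y - x‖ : ℝ) : EReal))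
      (nhdsWithin x (A \ {x})) ≤ ((η / ‖xhat - x‖ : ℝ) : EReal) := by
  have hd : xhat - x ≠ 0 := sub_ne_zero.mpr fun h => by subst h; linarith
  have hdescent := (hf.eventually_max_zero_sub_le trivial trivial hfhat hfx).and
    self_mem_nhdsWithin
  refine ⟨hd, EReal.limsup_coe_le_of_eventually_le ?_, liminf_le_of_frequently_le' ?_⟩
  · filter_upwards [hdescent] with α ⟨hle, hα⟩
    rwa [div_le_iff₀ hα, mul_comm]
  · refine (tendsto_add_smul_sub_nhdsWithin_diff hA hx hxhat hd).frequently
      (hdescent.frequently.mono fun α ⟨hle, hα⟩ => ?_)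
    have hα : (0 : ℝ) < α := hα
    rw [EReal.coe_le_coe_iff, add_sub_cancel_left, norm_smul, Real.norm_of_nonneg hα.le,
      div_le_div_iff₀ (mul_pos hα (norm_pos_iff.mpr hd)) (norm_pos_iff.mpr hd)]
    nlinarith [norm_nonneg (xhat - x)]
end

section
/- For each n ∈ ℕ, let u_n : [0,1] → ℝ² be defined by u_n(t) = (n, 0) for t ∈ [0, 1/n²] and u_n(t) = (0,0) otherwise (interpreting the control as the scalar n·1_{[0,1/n²]}). Then ‖u_n‖_{L²(0,1)} = 1 and the solution of ẋ¹ = 1, ẋ² = u_n, x(0) = (0,0), is x_n(t) = (t, min{nt, 1/n}), so that max_{t∈[0,1]} x_n²(t) = 1/n. Consequently, for every λ ≥ 0 there exists n with −∫₀¹ u_n(t)² dt + λ max_{t∈[0,1]} max{x_n²(t),0} = −1 + λ/n < 0. -/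
open MeasureTheory intervalIntegral

/-!
The control `u_n` concentrates its unit `L²` mass on `[0, 1/n²]`, so the state
`x_n²(t) = n · min t (1/n²) = min (nt) (1/n)` never exceeds `1/n`: the constraint violation
vanishes while the cost `-∫ u_n² = -1` does not, and any penalty weight `λ` is beaten by `n > λ`.
-/

theorem integral_indicator_Icc_const {a b : ℝ} (c : ℝ) (ha : 0 ≤ a) (hb : 0 ≤ b) :
    ∫ t in (0 : ℝ)..b, (Set.Icc 0 a).indicator (fun _ => c) t = c * min b a := by
  have hIoc : Set.Ioc (0 : ℝ) b ∩ Set.Icc 0 a = Set.Ioc 0 (min b a) := by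
    ext x
    simp only [Set.mem_inter_iff, Set.mem_Ioc, Set.mem_Icc, le_min_iff]
    constructor
    · rintro ⟨⟨hx0, hxb⟩, -, hxa⟩
      exact ⟨hx0, hxb, hxa⟩
    · rintro ⟨hx0, hxb, hxa⟩
      exact ⟨⟨hx0, hxb⟩, hx0.le, hxa⟩
  rw [integral_of_le hb, setIntegral_indicator measurableSet_Icc, hIoc, setIntegral_const,
    measureReal_def, Real.volume_Ioc, sub_zero, ENNReal.toReal_ofReal (le_min hb ha),
    smul_eq_mul, mul_comm]

theorem mul_min_one_div_sq {c : ℝ} (hc : 0 < c) (t : ℝ) :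
    c * min t (1 / c ^ 2) = min (c * t) (1 / c) := by
  rw [mul_min_of_nonneg _ _ hc.le]
  congr 1
  field_simp

theorem sSup_image_max_min_mul_Icc {c : ℝ} (hc : 1 ≤ c) :
    sSup ((fun t => max (min (c * t) (1 / c)) 0) '' Set.Icc (0 : ℝ) 1) = 1 / c := by
  have hc0 : 0 < c := by linarith
  refine IsGreatest.csSup_eq ⟨⟨1, ⟨zero_le_one, le_rfl⟩, ?_⟩, ?_⟩
  · have hle : 1 / c ≤ c * 1 := by
      rw [mul_one, div_le_iff₀ hc0]
      nlinarith
    simp only [min_eq_right hle, max_eq_left (by positivity : (0 : ℝ) ≤ 1 / c)]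
  · rintro _ ⟨t, -, rfl⟩
    exact max_le (min_le_right _ _) (by positivity)

theorem exists_nat_neg_one_add_div_neg {lam : ℝ} (hlam : 0 ≤ lam) :
    ∃ n : ℕ, 1 ≤ n ∧ -1 + lam / (n : ℝ) < 0 := by
  obtain ⟨n, hn⟩ := exists_nat_gt lam
  have hn0 : (0 : ℝ) < n := hlam.trans_lt hn
  refine ⟨n, by exact_mod_cast hn0, ?_⟩
  have : lam / n < 1 := (div_lt_one hn0).mpr hn
  linarith

/-- The counterexample controls `u_n = n·1_{[0,1/n²]}`: unit `L²` norm, trajectory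
`x_n²(t) = min{nt, 1/n}` with maximal constraint violation `1/n`, so for every
`λ ≥ 0` there is `n` with penalized value `−1 + λ/n < 0`. -/
theorem stmt12 (u : ℕ → ℝ → ℝ)
    (hu : ∀ (n : ℕ) (t : ℝ),
      u n t = if t ∈ Set.Icc (0 : ℝ) (1 / (n : ℝ) ^ 2) then (n : ℝ) else 0) :
    (∀ n : ℕ, 1 ≤ n → ∫ t in (0 : ℝ)..1, (u n t) ^ 2 = 1) ∧
    (∀ n : ℕ, 1 ≤ n → ∀ t ∈ Set.Icc (0 : ℝ) 1,
      ∫ τ in (0 : ℝ)..t, u n τ = min ((n : ℝ) * t) (1 / (n : ℝ))) ∧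
    (∀ n : ℕ, 1 ≤ n →
      sSup ((fun t => max (min ((n : ℝ) * t) (1 / (n : ℝ))) 0) '' Set.Icc (0 : ℝ) 1)
        = 1 / (n : ℝ)) ∧
    (∀ lam : ℝ, 0 ≤ lam → ∃ n : ℕ, 1 ≤ n ∧
      -(∫ t in (0 : ℝ)..1, (u n t) ^ 2) + lam * (1 / (n : ℝ)) = -1 + lam / (n : ℝ) ∧
      -1 + lam / (n : ℝ) < 0) := by
  have hind (n : ℕ) : u n = (Set.Icc 0 (1 / (n : ℝ) ^ 2)).indicator (fun _ => (n : ℝ)) :=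
    funext fun t => by rw [hu, Set.indicator_apply]
  have hsq (n : ℕ) (hn : 1 ≤ n) : ∫ t in (0 : ℝ)..1, (u n t) ^ 2 = 1 := by
    have hle : 1 / (n : ℝ) ^ 2 ≤ 1 :=
      div_le_one_of_le₀ (one_le_pow₀ (by exact_mod_cast hn)) (by positivity)
    have hu_sq : (fun t => u n t ^ 2) =
        (Set.Icc 0 (1 / (n : ℝ) ^ 2)).indicator (fun _ => (n : ℝ) ^ 2) := by
      ext t
      rw [hind, Set.indicator_apply, Set.indicator_apply]
      split_ifs <;> ring
    rw [hu_sq, integral_indicator_Icc_const _ (by positivity) zero_le_one, min_eq_right hle]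
    field_simp
  refine ⟨hsq, fun n hn t ht => ?_, fun n hn => sSup_image_max_min_mul_Icc (by exact_mod_cast hn),
    fun lam hlam => ?_⟩
  · rw [hind, integral_indicator_Icc_const _ (by positivity) ht.1,
      mul_min_one_div_sq (by exact_mod_cast hn)]
  · obtain ⟨n, hn, hneg⟩ := exists_nat_neg_one_add_div_neg hlam
    exact ⟨n, hn, by rw [hsq n hn, mul_one_div], hneg⟩
end
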